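/- arXiv:1407.4780 — 6 statements merged into one kernel-verified Lean document; each statement's English description precedes it below -/
import Mathlib

section
/- Let N be even and H_N the N×N tridiagonal 0-1 adjacency matrix of the path graph. Then H_N is invertible and the entries of G = -H_N^{-1} are: G(r,s) = (-1)^{(r+s-1)/2} if r < s with r odd and s even, G(r,s) = (-1)^{(r+s-1)/2} if r > s with r even and s odd, and G(r,s) = 0 otherwise. -/
/-!
Index rows and columns from 1 and extend the claimed `-H_N⁻¹` to `G = pathGreen` on all of
`ℕ × ℕ`. Row `r` of `H_N G` is `G(r - 1, ·) + G(r + 1, ·)`, where the ghost rows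
`0` and `N + 1` of `G` vanish on columns `1, …, N` (the latter because `N + 1` is odd). `G` is a
checkerboard with alternating signs, so `G(r + 2, s) = -G(r, s)` unless `s = r + 1`: away from the
diagonal the two neighbours cancel, and on it exactly one of them contributes `-1`. Hence
`H_N (-G) = 1`.
-/

/-- The N×N path-graph adjacency (Hückel) matrix. -/
def pathH (N : ℕ) : Matrix (Fin N) (Fin N) ℝ :=
  fun i j => if i.val + 1 = j.val ∨ j.val + 1 = i.val then 1 else 0

open Matrix

noncomputable def pathGreen (r s : ℕ) : ℝ :=
  if (r < s ∧ Odd r ∧ Even s) ∨ (s < r ∧ Even r ∧ Odd s) then (-1 : ℝ) ^ ((r + s - 1) / 2) else 0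

theorem pathGreen_zero_left (s : ℕ) : pathGreen 0 s = 0 := by
  simp [pathGreen]

theorem pathGreen_of_odd_of_le {r s : ℕ} (hr : Odd r) (hs : s ≤ r) : pathGreen r s = 0 := by
  rw [pathGreen, if_neg]
  rintro (⟨h, -⟩ | ⟨-, h, -⟩)
  · omega
  · exact Nat.not_even_iff_odd.2 hr h

theorem pathGreen_of_even_iff {r s : ℕ} (h : Even r ↔ Even s) : pathGreen r s = 0 := by
  rw [pathGreen, if_neg]
  rintro (⟨-, hr, hs⟩ | ⟨-, hr, hs⟩) <;> grind

theorem pathGreen_odd_even (p q : ℕ) :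
    pathGreen (2 * p + 1) (2 * q) = if p < q then (-1 : ℝ) ^ (p + q) else 0 := by
  have hexp : (2 * p + 1 + 2 * q - 1) / 2 = p + q := by omega
  simp only [pathGreen, hexp]
  congr 1
  simp [parity_simps]
  omega

theorem pathGreen_even_odd (p q : ℕ) :
    pathGreen (2 * p) (2 * q + 1) = if q < p then (-1 : ℝ) ^ (p + q) else 0 := by
  have hexp : (2 * p + (2 * q + 1) - 1) / 2 = p + q := by omega
  simp only [pathGreen, hexp]
  congr 1
  simp [parity_simps]
  omega

theorem pathGreen_add_two {a b : ℕ} (hb : b ≠ a + 1) : pathGreen (a + 2) b = -pathGreen a b := by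
  obtain ⟨p, rfl | rfl⟩ := Nat.even_or_odd' a <;> obtain ⟨q, rfl | rfl⟩ := Nat.even_or_odd' b
  · rw [pathGreen_of_even_iff (by simp [parity_simps]),
      pathGreen_of_even_iff (by simp [parity_simps]), neg_zero]
  · rw [show 2 * p + 2 = 2 * (p + 1) by ring, pathGreen_even_odd, pathGreen_even_odd]
    split_ifs <;> first | omega | ring
  · rw [show 2 * p + 1 + 2 = 2 * (p + 1) + 1 by ring, pathGreen_odd_even, pathGreen_odd_even]
    split_ifs <;> first | omega | ring
  · rw [pathGreen_of_even_iff (by simp [parity_simps]),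
      pathGreen_of_even_iff (by simp [parity_simps]), neg_zero]

theorem pathGreen_add_pathGreen_add_two_self (a : ℕ) :
    pathGreen a (a + 1) + pathGreen (a + 2) (a + 1) = -1 := by
  obtain ⟨p, rfl | rfl⟩ := Nat.even_or_odd' a
  · rw [show 2 * p + 2 = 2 * (p + 1) by ring, pathGreen_even_odd, pathGreen_even_odd]
    simp
  · rw [show 2 * p + 1 + 1 = 2 * (p + 1) by ring, show 2 * p + 1 + 2 = 2 * (p + 1) + 1 by ring,
      pathGreen_odd_even, pathGreen_odd_even]
    simp

theorem pathGreen_add_pathGreen_add_two (a b : ℕ) :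
    pathGreen a b + pathGreen (a + 2) b = if b = a + 1 then -1 else 0 := by
  split_ifs with hb
  · exact hb ▸ pathGreen_add_pathGreen_add_two_self a
  · rw [pathGreen_add_two hb, add_neg_cancel]

theorem Fin.sum_ite_val_eq {M : Type*} [AddCommMonoid M] (n m : ℕ) (c : M) :
    ∑ k : Fin n, (if (k : ℕ) = m then c else 0) = if m < n then c else 0 := by
  rw [Fin.sum_univ_eq_sum_range (fun k => if k = m then c else 0), Finset.sum_ite_eq']
  simp only [Finset.mem_range]

theorem pathH_mulVec_apply {N : ℕ} (f : ℕ → ℝ) (h0 : f 0 = 0) (hN : f (N + 1) = 0) (i : Fin N) :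
    (pathH N *ᵥ fun k => f (k + 1)) i = f i + f (i + 2) := by
  have hsplit : ∀ k : Fin N, pathH N i k * f (k + 1) =
      (if (k : ℕ) + 1 = i then f i else 0) + (if (k : ℕ) = i + 1 then f (i + 2) else 0) := by
    intro k
    simp only [pathH]
    split_ifs <;> first | omega | simp_all
  simp only [mulVec, dotProduct, hsplit, Finset.sum_add_distrib, Fin.sum_ite_val_eq]
  congr 1
  · obtain ⟨_ | j, hj⟩ := i
    · simp [h0]
    · simp only [Nat.add_right_cancel_iff, Fin.sum_ite_val_eq]
      simp [hj.trans' (Nat.lt_succ_self j)]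
  · split_ifs with h
    · rfl
    · rw [show (i : ℕ) + 2 = N + 1 by omega, hN]

noncomputable def pathHInv (N : ℕ) : Matrix (Fin N) (Fin N) ℝ :=
  of fun i j => -pathGreen (i + 1) (j + 1)

theorem pathH_mul_pathHInv {N : ℕ} (hN : Even N) : pathH N * pathHInv N = 1 := by
  ext i j
  calc (pathH N * pathHInv N) i j = (pathH N *ᵥ fun k => -pathGreen (k + 1) (j + 1)) i := rfl
    _ = -(pathGreen i (j + 1) + pathGreen (i + 2) (j + 1)) := by
      rw [pathH_mulVec_apply (fun r => -pathGreen r (j + 1)) (by rw [pathGreen_zero_left, neg_zero])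
        (by rw [pathGreen_of_odd_of_le hN.add_one (by omega), neg_zero]), neg_add]
    _ = (1 : Matrix (Fin N) (Fin N) ℝ) i j := by
      simp only [pathGreen_add_pathGreen_add_two, one_apply, Nat.add_right_cancel_iff, Fin.val_inj,
        eq_comm (a := j)]
      split_ifs <;> norm_num

theorem greens_function_pathH_general (N : ℕ) (hN : Even N) :
    IsUnit (pathH N).det ∧
    ∀ r s : Fin N,
      -((pathH N)⁻¹ r s) =
        (if (r.val + 1 < s.val + 1 ∧ Odd (r.val + 1) ∧ Even (s.val + 1)) ∨
            (s.val + 1 < r.val + 1 ∧ Even (r.val + 1) ∧ Odd (s.val + 1))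
         then (-1 : ℝ) ^ (((r.val + 1) + (s.val + 1) - 1) / 2) else 0) := by
  have hinv := pathH_mul_pathHInv hN
  refine ⟨isUnit_det_of_right_inverse hinv, fun r s => ?_⟩
  rw [inv_eq_right_inv hinv, pathHInv, of_apply, neg_neg, pathGreen]

theorem greens_function_pathH (N : ℕ) (hN : Even N) (hpos : 0 < N) :
    IsUnit (pathH N).det ∧
    ∀ r s : Fin N,
      -((pathH N)⁻¹ r s) =
        (if (r.val + 1 < s.val + 1 ∧ Odd (r.val + 1) ∧ Even (s.val + 1)) ∨
            (s.val + 1 < r.val + 1 ∧ Even (r.val + 1) ∧ Odd (s.val + 1))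
         then (-1 : ℝ) ^ (((r.val + 1) + (s.val + 1) - 1) / 2) else 0) :=
  greens_function_pathH_general N hN
end

section
/- Let N be even, ω = π/(N+1). For integers r,s with 1 ≤ s < r ≤ N, r even and s odd, the sum -(1/(N+1)) · Σ_{k=1}^{N} sin(rkω)·sin(skω)/cos(kω) equals (-1)^{(r+s-1)/2}. -/
/-!
With `ω = π/(N+1)` and `r ∓ s = 2m + 1`, `2 sin(rkω) sin(skω) = cos((2m+1)kω) - cos((2(m+s)+1)kω)`.
Summing over the full range `k = 0, …, N` (the `k = 0` term vanishes), the sums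
`S m = ∑ₖ cos((2m+1)kω) / cos(kω)` satisfy `S 0 = N + 1` and
`S (m+1) + S m = 2 ∑ₖ cos(2(m+1)kω) = 0`, a sum over a nontrivial `(N+1)`-st root of unity.
Hence `S m = (-1)^m (N+1)`, and the two sign patterns differ because `s` is odd.
-/

open Real Finset

theorem sum_range_cos_two_pi_mul_div_eq_zero {n j : ℕ} (hn : n ≠ 0) (hj : ¬ n ∣ j) :
    ∑ k ∈ range n, cos (2 * π * j * k / n) = 0 := by
  set z := Complex.exp (2 * π * Complex.I / n) ^ j
  have hz_pow : z ^ n = 1 := by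
    rw [pow_right_comm, (Complex.isPrimitiveRoot_exp n hn).pow_eq_one, one_pow]
  have hz_ne : z ≠ 1 := by
    rwa [Ne, (Complex.isPrimitiveRoot_exp n hn).pow_eq_one_iff_dvd]
  have hz_re (k : ℕ) : (z ^ k).re = cos (2 * π * j * k / n) := by
    rw [← pow_mul, ← Complex.exp_nat_mul, ← Complex.exp_ofReal_mul_I_re]
    push_cast
    ring_nf
  simp_rw [← hz_re, ← Complex.re_sum, geom_sum_eq hz_ne, hz_pow, sub_self, zero_div,
    Complex.zero_re]

theorem cos_nat_mul_pi_div_ne_zero {n : ℕ} (hn : Odd n) (k : ℕ) : cos (k * π / n) ≠ 0 := by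
  rw [Ne, cos_eq_zero_iff]
  rintro ⟨l, hl⟩
  have hn0 : (n : ℝ) ≠ 0 := by exact_mod_cast hn.pos.ne'
  have h : ((2 * k : ℤ) : ℝ) = ((2 * l + 1) * n : ℤ) := by
    field_simp at hl
    push_cast
    nlinarith [pi_pos]
  have h' : 2 * (k : ℤ) = (2 * l + 1) * n := by exact_mod_cast h
  have : Odd (2 * (k : ℤ)) := h' ▸ (odd_two_mul_add_one l).mul (hn.natCast)
  exact Int.not_even_iff_odd.mpr this (even_two_mul _)

theorem sum_range_cos_odd_mul_div_cos {n : ℕ} (hn : Odd n) {m : ℕ} (hm : m < n) :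
    ∑ k ∈ range n, cos ((2 * m + 1) * (k * π / n)) / cos (k * π / n) = (-1) ^ m * n := by
  induction m with
  | zero => simp [div_self (cos_nat_mul_pi_div_ne_zero hn _)]
  | succ m ih =>
    -- `cos ((2m+3)x) + cos ((2m+1)x) = 2 cos ((2m+2)x) cos x`
    have hterm (k : ℕ) : cos ((2 * (m + 1 : ℕ) + 1) * (k * π / n)) / cos (k * π / n)
        = 2 * cos (2 * π * (m + 1 : ℕ) * k / n)
          - cos ((2 * m + 1) * (k * π / n)) / cos (k * π / n) := by
      have hc := cos_nat_mul_pi_div_ne_zero hn k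
      set x := k * π / n
      rw [show (2 * ((m + 1 : ℕ) : ℝ) + 1) * x = 2 * (m + 1) * x + x by push_cast; ring,
        show (2 * (m : ℝ) + 1) * x = 2 * (m + 1) * x - x by ring,
        show 2 * π * ((m + 1 : ℕ) : ℝ) * k / n = 2 * (m + 1) * x by push_cast; ring,
        cos_add, cos_sub]
      field_simp
      ring
    have hsum := sum_range_cos_two_pi_mul_div_eq_zero hn.pos.ne'
      (Nat.not_dvd_of_pos_of_lt m.succ_pos hm)
    rw [sum_congr rfl fun k _ => hterm k, sum_sub_distrib, ← mul_sum, hsum, ih (by omega)]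
    ring

theorem sum_Icc_one_eq_sum_range_add_one {M : Type*} [AddCommMonoid M] {f : ℕ → M}
    (hf : f 0 = 0) (N : ℕ) : ∑ k ∈ Icc 1 N, f k = ∑ k ∈ range (N + 1), f k := by
  rw [range_eq_Ico, sum_eq_sum_Ico_succ_bot N.add_one_pos, hf, zero_add, zero_add,
    Ico_add_one_right_eq_Icc]

theorem greens_sum_closed_form_general (N : ℕ) (hN : Even N)
    (r s : ℕ) (hsr : s < r) (hr : r ≤ N)
    (hre : Even r) (hso : Odd s) :
    -(1 / (N + 1 : ℝ)) *
      ∑ k ∈ Finset.Icc 1 N,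
        Real.sin (r * k * (π / (N + 1))) * Real.sin (s * k * (π / (N + 1))) /
          Real.cos (k * (π / (N + 1)))
      = (-1 : ℝ) ^ ((r + s - 1) / 2) := by
  obtain ⟨m, hm⟩ : Odd (r - s) := Nat.Even.sub_odd hsr.le hre hso
  rw [show (r + s - 1) / 2 = m + s by omega]
  have hdiff : (r : ℝ) - s = 2 * m + 1 := by
    rw [show r = 2 * m + 1 + s by omega]; push_cast; ring
  have hsum : (r : ℝ) + s = 2 * (m + s : ℕ) + 1 := by
    rw [show r = 2 * m + 1 + s by omega]; push_cast; ring
  set F : ℕ → ℕ → ℝ := fun m k =>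
    cos ((2 * m + 1) * (k * π / (N + 1 : ℕ))) / cos (k * π / (N + 1 : ℕ))
  have hterm (k : ℕ) : sin (r * k * (π / (N + 1))) * sin (s * k * (π / (N + 1))) /
      cos (k * (π / (N + 1))) = (F m k - F (m + s) k) / 2 := by
    simp only [F]
    push_cast
    rw [mul_assoc (r : ℝ), mul_assoc (s : ℝ), ← mul_div_assoc]
    set x := (k : ℝ) * π / (N + 1)
    have hprod := two_mul_sin_mul_sin (r * x) (s * x)
    rw [← sub_mul, ← add_mul, hdiff, hsum] at hprod
    push_cast at hprod
    linear_combination hprod / (2 * cos x)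
  rw [sum_Icc_one_eq_sum_range_add_one (by simp), sum_congr rfl fun k _ => hterm k, ← sum_div,
    sum_sub_distrib, sum_range_cos_odd_mul_div_cos hN.add_one (by omega),
    sum_range_cos_odd_mul_div_cos hN.add_one (by omega), pow_add, hso.neg_one_pow]
  push_cast
  field_simp
  ring

theorem greens_sum_closed_form (N : ℕ) (hN : Even N) (hpos : 0 < N)
    (r s : ℕ) (hs : 1 ≤ s) (hsr : s < r) (hr : r ≤ N)
    (hre : Even r) (hso : Odd s) :
    -(1 / (N + 1 : ℝ)) *
      ∑ k ∈ Finset.Icc 1 N,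
        Real.sin (r * k * (π / (N + 1))) * Real.sin (s * k * (π / (N + 1))) /
          Real.cos (k * (π / (N + 1)))
      = (-1 : ℝ) ^ ((r + s - 1) / 2) :=
  greens_sum_closed_form_general N hN r s hsr hr hre hso
end

section
/- Let N be even, ω = π/(N+1). For integers r,s with 1 ≤ r,s ≤ N of the same parity, Σ_{k=1}^{N} sin(rkω)·sin(skω)/cos(kω) = 0. -/
/-!
The substitution `k ↦ N + 1 - k` turns `kω` into `π - kω`, so it multiplies the summand by
`(-1)^r (-1)^s / (-1) = -1` when `r` and `s` have the same parity. Since `N + 1` is odd this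
involution of `{1, …, N}` has no fixed point, so the terms cancel in pairs.
-/

open Real Finset

theorem Finset.sum_Icc_eq_zero_of_reflect {M : Type*} [AddCommMonoid M] {N : ℕ} (hN : Even N)
    (f : ℕ → M) (hf : ∀ k ∈ Icc 1 N, f k + f (N + 1 - k) = 0) :
    ∑ k ∈ Icc 1 N, f k = 0 := by
  refine sum_involution (fun k _ => N + 1 - k) hf ?_ ?_ ?_
  · intro k hk _ hfix
    obtain ⟨m, rfl⟩ := hN
    simp only [mem_Icc] at hk
    omega
  · intro k hk
    simp only [mem_Icc] at hk ⊢
    omega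
  · intro k hk
    simp only [mem_Icc] at hk
    omega

theorem Real.sin_nat_mul_sub_mul_pi_div {L : ℝ} (hL : L ≠ 0) (m : ℕ) (x : ℝ) :
    sin (m * (L - x) * (π / L)) = -((-1) ^ m * sin (m * x * (π / L))) := by
  rw [← sin_nat_mul_pi_sub]
  congr 1
  field_simp

theorem Real.sin_mul_sin_div_cos_sub_mul_pi_div {L : ℝ} (hL : L ≠ 0) {r s : ℕ}
    (hrs : Even (r + s)) (x : ℝ) :
    sin (r * (L - x) * (π / L)) * sin (s * (L - x) * (π / L)) / cos ((L - x) * (π / L)) =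
      -(sin (r * x * (π / L)) * sin (s * x * (π / L)) / cos (x * (π / L))) := by
  have hcos : cos ((L - x) * (π / L)) = -cos (x * (π / L)) := by
    rw [← cos_pi_sub]
    congr 1
    field_simp
  have hsign : ((-1 : ℝ) ^ r) * (-1) ^ s = 1 := by rw [← pow_add, hrs.neg_one_pow]
  rw [sin_nat_mul_sub_mul_pi_div hL, sin_nat_mul_sub_mul_pi_div hL, hcos, div_neg]
  linear_combination -(sin (r * x * (π / L)) * sin (s * x * (π / L)) / cos (x * (π / L))) * hsign

theorem greens_sum_same_parity_zero_general (N : ℕ) (hN : Even N)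
    (r s : ℕ)
    (hpar : (Odd r ∧ Odd s) ∨ (Even r ∧ Even s)) :
    ∑ k ∈ Finset.Icc 1 N,
      Real.sin (r * k * (π / (N + 1))) * Real.sin (s * k * (π / (N + 1))) /
        Real.cos (k * (π / (N + 1))) = 0 := by
  have hrs : Even (r + s) := by
    rcases hpar with ⟨hr, hs⟩ | ⟨hr, hs⟩
    exacts [hr.add_odd hs, hr.add hs]
  refine sum_Icc_eq_zero_of_reflect hN _ fun k hk => ?_
  have hcast : ((N + 1 - k : ℕ) : ℝ) = (N + 1 : ℝ) - k := by
    simp only [mem_Icc] at hk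
    push_cast [Nat.cast_sub (by omega : k ≤ N + 1)]
    ring
  rw [hcast, sin_mul_sin_div_cos_sub_mul_pi_div (by positivity) hrs, add_neg_cancel]

theorem greens_sum_same_parity_zero (N : ℕ) (hN : Even N) (hpos : 0 < N)
    (r s : ℕ) (hr1 : 1 ≤ r) (hrN : r ≤ N) (hs1 : 1 ≤ s) (hsN : s ≤ N)
    (hpar : (Odd r ∧ Odd s) ∨ (Even r ∧ Even s)) :
    ∑ k ∈ Finset.Icc 1 N,
      Real.sin (r * k * (π / (N + 1))) * Real.sin (s * k * (π / (N + 1))) /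
        Real.cos (k * (π / (N + 1))) = 0 :=
  greens_sum_same_parity_zero_general N hN r s hpar
end

section
/- Let N ≡ 1 (mod 4), N ≥ 5, and H^c_N the adjacency matrix of the N-cycle. Then H^c_N is invertible and the first column (x_0, x_1, …, x_{N-1}) of (H^c_N)^{-1} is given by x_j = (1/2)·c_{j mod 4} where (c_0,c_1,c_2,c_3) = (1,1,-1,-1). -/
/-!
`cycleH N` is the circulant matrix generated by the indicator of `{1, -1}` in `Fin N`, so we look
for its inverse among circulant matrices. Since `circulant v * circulant w = circulant (circulant v *ᵥ w)`,
it suffices to find `x` with `x (j - 1) + x (j + 1) = δ j 0` cyclically. The vector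
`x j = c (j mod 4) / 2` does this: away from `0` and `N - 1` because `c (m + 2) = - c m`, and at
those two points because `N - 1 ≡ 0 (mod 4)`.
-/

/-- The N×N cycle-graph adjacency (cyclic Hückel) matrix. -/
def cycleH (N : ℕ) : Matrix (Fin N) (Fin N) ℝ :=
  fun i j => if (i.val + 1) % N = j.val ∨ (j.val + 1) % N = i.val then 1 else 0

open Matrix

theorem circulant_ite_eq_or_eq_neg_mulVec {n α : Type*} [Fintype n] [AddCommGroup n] [DecidableEq n]
    [NonAssocSemiring α] {a : n} (ha : a ≠ -a) (w : n → α) (i : n) :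
    (circulant (fun d => if d = a ∨ d = -a then 1 else 0) *ᵥ w) i = w (i - a) + w (i + a) := by
  simp only [mulVec, dotProduct, circulant_apply]
  rw [Fintype.sum_eq_add (i - a) (i + a) (by simpa [sub_eq_add_neg] using ha.symm)]
  · simp
  · rintro j ⟨hja, hja'⟩
    have : ¬(i - j = a ∨ i - j = -a) := by
      rintro (h | h)
      · exact hja (by rw [← h]; abel)
      · exact hja' (by rw [← neg_neg a, ← h]; abel)
    simp [this]

noncomputable def periodFourSign (m : ℕ) : ℝ :=
  if m % 4 = 0 then 1 else if m % 4 = 1 then 1 else if m % 4 = 2 then -1 else -1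

theorem periodFourSign_add_two (m : ℕ) : periodFourSign (m + 2) = -periodFourSign m := by
  unfold periodFourSign
  have : m % 4 = 0 ∨ m % 4 = 1 ∨ m % 4 = 2 ∨ m % 4 = 3 := by omega
  rcases this with h | h | h | h <;> simp [h, Nat.add_mod]

theorem periodFourSign_add_one_add_sub_one {n : ℕ} (hn : n % 4 = 0) (d : Fin (n + 1)) :
    periodFourSign (d + 1 : Fin (n + 1)) + periodFourSign (d - 1 : Fin (n + 1)) =
      if d = 0 then 2 else 0 := by
  rw [Fin.val_add_one, Fin.coe_sub_one]
  by_cases hd0 : d = 0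
  · subst hd0
    by_cases hn0 : n = 0
    · subst hn0; norm_num [periodFourSign]
    · rw [if_neg (by simpa [Fin.ext_iff, eq_comm] using hn0)]
      norm_num [periodFourSign, hn]
  obtain ⟨m, hm⟩ : ∃ m, (d : ℕ) = m + 1 :=
    Nat.exists_eq_succ_of_ne_zero fun h => hd0 (Fin.ext h)
  rw [if_neg hd0, if_neg hd0, hm, Nat.add_sub_cancel]
  by_cases hdl : d = Fin.last n
  · have hnm : n = m + 1 := by rw [← hm, hdl, Fin.val_last]
    have hm4 : m % 4 = 3 := by omega
    norm_num [hdl, periodFourSign, hm4]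
  · rw [if_neg hdl, add_assoc, periodFourSign_add_two, neg_add_cancel]

theorem cycleH_succ_eq_circulant (n : ℕ) :
    cycleH (n + 1) = circulant fun d => if d = 1 ∨ d = -1 then 1 else 0 := by
  have hsucc (a b : Fin (n + 1)) : (a.val + 1) % (n + 1) = b.val ↔ a + 1 = b := by
    rw [Fin.ext_iff, Fin.val_add, Fin.val_one', Nat.add_mod_mod]
  ext i j
  simp only [cycleH, circulant_apply, hsucc, sub_eq_iff_eq_add', eq_add_neg_iff_add_eq, or_comm,
    eq_comm]

theorem cycleH_succ_mul_circulant_periodFourSign {n : ℕ} (hn : n % 4 = 0) (hn0 : n ≠ 0) :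
    cycleH (n + 1) * circulant (fun d : Fin (n + 1) => 1 / 2 * periodFourSign d) = 1 := by
  have hne : (1 : Fin (n + 1)) ≠ -1 := by
    rw [Ne, Fin.ext_iff, Fin.val_one', Fin.coe_neg_one, Nat.mod_eq_of_lt (by omega)]
    omega
  rw [cycleH_succ_eq_circulant, circulant_mul, ← circulant_single_one ℝ (Fin (n + 1))]
  congr 1
  funext d
  rw [circulant_ite_eq_or_eq_neg_mulVec hne, ← mul_add, add_comm,
    periodFourSign_add_one_add_sub_one hn, Pi.single_apply]
  split_ifs <;> norm_num

theorem inv_cycleH_mod4_1 (N : ℕ) (hmod : N % 4 = 1) (hN : 5 ≤ N) :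
    IsUnit (cycleH N).det ∧
    ∀ j : Fin N, (cycleH N)⁻¹ j ⟨0, by omega⟩ =
      (1 / 2 : ℝ) * (if j.val % 4 = 0 then 1 else if j.val % 4 = 1 then 1
                     else if j.val % 4 = 2 then (-1) else (-1)) := by
  obtain ⟨n, rfl⟩ : ∃ n, N = n + 1 := ⟨N - 1, by omega⟩
  have hinv := cycleH_succ_mul_circulant_periodFourSign (n := n) (by omega) (by omega)
  refine ⟨isUnit_det_of_right_inverse hinv, fun j => ?_⟩
  rw [inv_eq_right_inv hinv, circulant_apply, Fin.mk_zero, sub_zero]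
  rfl
end

section
/- Let N ≡ 2 (mod 4), N ≥ 6, and H^c_N the adjacency matrix of the N-cycle. Then H^c_N is invertible and the first column (x_0, …, x_{N-1}) of (H^c_N)^{-1} satisfies x_j = (1/2)·c_{j mod 4} where (c_0,c_1,c_2,c_3) = (0,1,0,-1). -/
open Matrix

section CycleMatrix

variable {N : ℕ} [NeZero N]

theorem cycleH_apply (i j : Fin N) :
    cycleH N i j = if i + 1 = j ∨ j + 1 = i then 1 else 0 := by
  simp only [cycleH, Fin.ext_iff, Fin.val_add, Fin.val_one', Nat.add_mod_mod]

theorem Fin.add_one_ne_sub_one (hN : 2 < N) (i : Fin N) : i + 1 ≠ i - 1 := by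
  intro h
  rw [eq_sub_iff_add_eq, add_assoc, add_eq_left, Fin.ext_iff, Fin.val_add, Fin.val_one',
    Nat.mod_eq_of_lt (by omega : 1 < N), Nat.mod_eq_of_lt hN] at h
  simp at h

theorem cycleH_mulVec (hN : 2 < N) (w : Fin N → ℝ) (i : Fin N) :
    (cycleH N *ᵥ w) i = w (i + 1) + w (i - 1) := by
  have hsplit (j : Fin N) :
      cycleH N i j = (if j = i + 1 then 1 else 0) + (if j = i - 1 then 1 else 0) := by
    rw [cycleH_apply]
    by_cases h1 : j = i + 1
    · simp [h1, Fin.add_one_ne_sub_one hN i]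
    · simp [h1, eq_comm (a := i + 1), eq_sub_iff_add_eq]
  simp only [mulVec, dotProduct, hsplit, add_mul, ite_mul, one_mul, zero_mul,
    Finset.sum_add_distrib, Finset.sum_ite_eq', Finset.mem_univ, if_true]

theorem cycleH_mul_circulant (hN : 2 < N) (w : Fin N → ℝ) :
    cycleH N * circulant w = circulant (fun i => w (i + 1) + w (i - 1)) := by
  ext i k
  have := cycleH_mulVec hN (fun j => w (j - k)) i
  simp only [mulVec, dotProduct] at this
  simp only [mul_apply, circulant_apply, this, add_sub_right_comm, sub_right_comm]

end CycleMatrix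

/-- `sinSeq m = sin (m π / 2)`. -/
def sinSeq (m : ℕ) : ℝ :=
  if m % 4 = 0 then 0 else if m % 4 = 1 then 1 else if m % 4 = 2 then 0 else -1

theorem sinSeq_add_two (m : ℕ) : sinSeq (m + 2) = -sinSeq m := by
  have := Nat.mod_lt m (by norm_num : 4 > 0)
  simp only [sinSeq, Nat.add_mod m 2]
  interval_cases m % 4 <;> norm_num

theorem sinSeq_val_add_one_add_sinSeq_val_sub_one {n : ℕ} (hmod : (n + 1) % 4 = 2)
    (i : Fin (n + 1)) :
    sinSeq (i + 1 : Fin (n + 1)) + sinSeq (i - 1 : Fin (n + 1)) = if i = 0 then 2 else 0 := by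
  rw [Fin.val_add_one, Fin.coe_sub_one]
  split_ifs with hlast h0 h0
  · rw [h0, eq_comm, Fin.last_eq_zero_iff] at hlast
    omega
  · rw [hlast, Fin.val_last]
    simp [sinSeq, show (n - 1) % 4 = 0 by omega]
  · subst h0
    norm_num [sinSeq, show n % 4 = 1 by omega]
  · obtain ⟨m, hm⟩ :=
      Nat.exists_eq_add_one.mpr (Nat.pos_of_ne_zero (Fin.val_ne_zero_iff.mpr h0))
    rw [hm, Nat.add_sub_cancel, sinSeq_add_two]
    ring

theorem cycleH_mul_circulant_sinSeq {n : ℕ} (hmod : (n + 1) % 4 = 2) (hn : 2 ≤ n) :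
    cycleH (n + 1) * circulant (fun j : Fin (n + 1) => sinSeq j / 2) = 1 := by
  rw [cycleH_mul_circulant (by omega), ← circulant_single_one]
  congr 1
  ext i
  rw [← add_div, sinSeq_val_add_one_add_sinSeq_val_sub_one hmod, Pi.single_apply]
  split_ifs <;> norm_num

theorem inv_cycleH_mod4_2 (N : ℕ) (hmod : N % 4 = 2) (hN : 6 ≤ N) :
    IsUnit (cycleH N).det ∧
    ∀ j : Fin N, (cycleH N)⁻¹ j ⟨0, by omega⟩ =
      (1 / 2 : ℝ) * (if j.val % 4 = 0 then 0 else if j.val % 4 = 1 then 1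
                     else if j.val % 4 = 2 then 0 else (-1)) := by
  obtain ⟨n, rfl⟩ : ∃ n, N = n + 1 := ⟨N - 1, by omega⟩
  have hright := cycleH_mul_circulant_sinSeq hmod (by omega)
  refine ⟨isUnit_det_of_right_inverse hright, fun j => ?_⟩
  rw [inv_eq_right_inv hright, circulant_apply, one_div_mul_eq_div]
  exact congrArg (fun k : Fin (n + 1) => sinSeq k / 2) (sub_zero j)
end

section
/- Let N be even, α, β nonzero reals, and H_alt the N×N tridiagonal matrix with zero diagonal and off-diagonal entries alternating β, α, β, α, … (starting and ending with β). Then H_alt is invertible and for r ≥ s, the (r,s) entry of -H_alt^{-1} equals ((-1)^{(r+s-1)/2}/(4β))·(α/β)^{(r-s-1)/2}·(1-(-1)^s)·(1+(-1)^r), with the symmetric formula for r ≤ s. -/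
/-!
Order the sites as even ones first, then odd ones. Then `altH N α β` is the block matrix
`[[0, B], [Bᵀ, 0]]` with `B = β • 1 + α • L` bidiagonal (`L` the subdiagonal shift), since site `2a`
is coupled to `2a + 1` by `β` and to `2a - 1` by `α`. Summing the geometric series,
`B⁻¹ = β⁻¹ ∑ₖ (-α/β)ᵏ Lᵏ`, so the inverse is `[[0, B⁻ᵀ], [B⁻¹, 0]]`: its only nonzero entries
couple an odd site `2a + 1` with an even site `2b ≤ 2a + 1`, and equal `β⁻¹ (-α/β)^(a-b)`. With the
1-based indices of the statement this is the closed form. That `H · H⁻¹ = 1` reduces row by row to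
`β x_{n+1} + α x_n = 0` for `x_n = β⁻¹ (-α/β)ⁿ`. The parity of `N` matters only at the last row:
for even `N` it is an odd site, whose missing right neighbour would have met a vanishing entry.
-/

/-- The N×N bond-alternating Hückel matrix: tridiagonal with zero diagonal and
off-diagonal entries alternating β, α, β, α, … (starting with β). -/
def altH (N : ℕ) (α β : ℝ) : Matrix (Fin N) (Fin N) ℝ :=
  fun i j =>
    if i.val + 1 = j.val then (if Even i.val then β else α)
    else if j.val + 1 = i.val then (if Even j.val then β else α)
    else 0

open Finset

section Field

variable {K : Type*} [Field K] {α β : K}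

def bidiagInv (α β : K) (a b : ℕ) : K :=
  if b ≤ a then β⁻¹ * (-α / β) ^ (a - b) else 0

def altHInv (α β : K) (r s : ℕ) : K :=
  if Odd r ∧ Even s then bidiagInv α β (r / 2) (s / 2)
  else if Even r ∧ Odd s then bidiagInv α β (s / 2) (r / 2)
  else 0

theorem geom_neg_div_recurrence (hβ : β ≠ 0) (n : ℕ) :
    β * (β⁻¹ * (-α / β) ^ (n + 1)) + α * (β⁻¹ * (-α / β) ^ n) = 0 := by
  rw [pow_succ, mul_inv_cancel_left₀ hβ]
  field_simp
  ring

theorem bidiagInv_of_lt {a b : ℕ} (h : a < b) : bidiagInv α β a b = 0 :=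
  if_neg h.not_ge

theorem beta_mul_bidiagInv_zero_left (hβ : β ≠ 0) (b : ℕ) :
    β * bidiagInv α β 0 b = if b = 0 then 1 else 0 := by
  rcases b with _ | b <;> simp [bidiagInv, hβ]

theorem beta_mul_bidiagInv_succ_add (hβ : β ≠ 0) (a b : ℕ) :
    β * bidiagInv α β (a + 1) b + α * bidiagInv α β a b = if a + 1 = b then 1 else 0 := by
  unfold bidiagInv
  rcases lt_trichotomy b (a + 1) with h | rfl | h
  · rw [if_pos h.le, if_pos (by omega), if_neg h.ne', Nat.sub_add_comm (by omega)]
    exact geom_neg_div_recurrence hβ _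
  · simp [hβ]
  · rw [if_neg (by omega), if_neg (by omega), if_neg h.ne]
    ring

theorem beta_mul_bidiagInv_add_succ (hβ : β ≠ 0) (a c : ℕ) :
    β * bidiagInv α β c a + α * bidiagInv α β c (a + 1) = if a = c then 1 else 0 := by
  unfold bidiagInv
  rcases lt_trichotomy a c with h | rfl | h
  · rw [if_pos h.le, if_pos (by omega : a + 1 ≤ c), if_neg h.ne,
      show c - a = c - (a + 1) + 1 by omega]
    exact geom_neg_div_recurrence hβ _
  · simp [hβ]
  · rw [if_neg (by omega), if_neg (by omega), if_neg h.ne']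
    ring

@[simp]
theorem altHInv_odd_even (a b : ℕ) : altHInv α β (2 * a + 1) (2 * b) = bidiagInv α β a b := by
  simp [altHInv, show (2 * a + 1) / 2 = a by omega]

@[simp]
theorem altHInv_even_odd (a b : ℕ) : altHInv α β (2 * b) (2 * a + 1) = bidiagInv α β a b := by
  simp [altHInv, show (2 * a + 1) / 2 = a by omega]

@[simp]
theorem altHInv_even_even (a b : ℕ) : altHInv α β (2 * a) (2 * b) = 0 := by
  simp [altHInv, Nat.odd_iff]

@[simp]
theorem altHInv_odd_odd (a b : ℕ) : altHInv α β (2 * a + 1) (2 * b + 1) = 0 := by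
  simp [altHInv]

theorem altHInv_comm (r s : ℕ) : altHInv α β r s = altHInv α β s r := by
  unfold altHInv
  grind

end Field

section Real

variable {N : ℕ} {α β : ℝ}

theorem sum_altH_mul (f : ℕ → ℝ) (i : Fin N) :
    ∑ k : Fin N, altH N α β i k * f k =
      (if i.val + 1 < N then (if Even i.val then β else α) * f (i + 1) else 0) +
      (if i.val = 0 then 0 else (if Even (i.val - 1) then β else α) * f (i - 1)) := by
  obtain ⟨n, hn⟩ := i
  let bond (m : ℕ) : ℝ := if Even m then β else α
  let term (k : ℕ) : ℝ := (if n + 1 = k then bond n else if k + 1 = n then bond k else 0) * f k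
  have hterm (k : ℕ) :
      term k =
        (if k = n + 1 then bond n * f k else 0) + (if k + 1 = n then bond k * f k else 0) := by
    simp only [term]
    split_ifs <;> first | omega | ring
  change ∑ k : Fin N, term k = _
  rw [Fin.sum_univ_eq_sum_range term, sum_congr rfl fun k _ => hterm k, sum_add_distrib,
    sum_ite_eq']
  rcases n with _ | n
  · simp [bond]
  · simp [Nat.lt_of_succ_lt hn, bond]

theorem altH_row_altHInv (hN : Even N) (hβ : β ≠ 0) {i j : ℕ} (hi : i < N) (hj : j < N) :
    (if i + 1 < N then (if Even i then β else α) * altHInv α β (i + 1) j else 0) +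
      (if i = 0 then 0 else (if Even (i - 1) then β else α) * altHInv α β (i - 1) j) =
      if i = j then 1 else 0 := by
  obtain ⟨n, rfl⟩ := hN
  obtain ⟨a, rfl | rfl⟩ := Nat.even_or_odd' i
  · rcases a with _ | a
    · obtain ⟨b, rfl | rfl⟩ := Nat.even_or_odd' j
      · rw [altHInv_odd_even]
        simp [show 1 < n + n by omega, beta_mul_bidiagInv_zero_left hβ]
      · rw [altHInv_odd_odd]
        simp
    · rw [show 2 * (a + 1) - 1 = 2 * a + 1 by omega]
      obtain ⟨b, rfl | rfl⟩ := Nat.even_or_odd' j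
      · rw [altHInv_odd_even, altHInv_odd_even]
        simp [show 2 * (a + 1) + 1 < n + n by omega, beta_mul_bidiagInv_succ_add hβ]
      · rw [altHInv_odd_odd, altHInv_odd_odd, if_neg (show 2 * (a + 1) ≠ 2 * b + 1 by omega)]
        simp
  · rw [show 2 * a + 1 + 1 = 2 * (a + 1) by ring]
    obtain ⟨b, rfl | rfl⟩ := Nat.even_or_odd' j
    · rw [Nat.add_sub_cancel, altHInv_even_even, if_neg (show 2 * a + 1 ≠ 2 * b by omega)]
      simp
    · rw [altHInv_even_odd, Nat.add_sub_cancel, altHInv_even_odd, if_neg (Nat.not_even_bit1 a),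
        if_pos (even_two_mul a), if_neg (Nat.succ_ne_zero _), add_comm]
      simp only [show 2 * a + 1 = 2 * b + 1 ↔ a = b by omega]
      rw [← beta_mul_bidiagInv_add_succ hβ]
      congr 1
      split_ifs with h
      · rfl
      · rw [bidiagInv_of_lt (by omega), mul_zero]

theorem altH_mul_altHInv (hN : Even N) (hβ : β ≠ 0) :
    altH N α β * Matrix.of (fun i j : Fin N => altHInv α β i j) = 1 := by
  ext i j
  simp only [Matrix.mul_apply, Matrix.one_apply, Fin.ext_iff, Matrix.of_apply]
  rw [sum_altH_mul (fun k => altHInv α β k j)]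
  exact altH_row_altHInv hN hβ i.isLt j.isLt

theorem neg_altHInv_eq {r s : ℕ} (h : s ≤ r) :
    -altHInv α β r s =
      ((-1 : ℝ) ^ (((r + 1) + (s + 1) - 1) / 2) / (4 * β)) *
        (α / β) ^ (((r + 1) - (s + 1) - 1) / 2) *
        (1 - (-1 : ℝ) ^ (s + 1)) * (1 + (-1 : ℝ) ^ (r + 1)) := by
  obtain ⟨b, rfl | rfl⟩ := Nat.even_or_odd' s <;> obtain ⟨a, rfl | rfl⟩ := Nat.even_or_odd' r
  · simp [pow_succ]
  · obtain ⟨d, rfl⟩ : ∃ d, a = b + d := ⟨a - b, by omega⟩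
    have hr : (-1 : ℝ) ^ (2 * (b + d) + 1 + 1) = 1 := Even.neg_one_pow ⟨b + d + 1, by ring⟩
    have hs : (-1 : ℝ) ^ (2 * b + 1) = -1 := (odd_two_mul_add_one b).neg_one_pow
    have hrs : (-1 : ℝ) ^ (d + 2 * b + 1) = -(-1) ^ d := by simp [pow_succ, pow_add, pow_mul]
    rw [altHInv_odd_even, bidiagInv, if_pos (by omega), Nat.add_sub_cancel_left,
      show (2 * (b + d) + 1 + 1 + (2 * b + 1) - 1) / 2 = d + 2 * b + 1 by omega,
      show (2 * (b + d) + 1 + 1 - (2 * b + 1) - 1) / 2 = d by omega, hr, hs, hrs, neg_div, neg_pow]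
    field_simp
    ring
  · simp [pow_succ, bidiagInv_of_lt (show b < a by omega)]
  · simp [pow_succ]

end Real

theorem greens_function_altH_general (N : ℕ) (hN : Even N)
    (α β : ℝ) (hβ : β ≠ 0) :
    IsUnit (altH N α β).det ∧
    (∀ r s : Fin N, s.val ≤ r.val →
      -((altH N α β)⁻¹ r s) =
        ((-1 : ℝ) ^ (((r.val + 1) + (s.val + 1) - 1) / 2) / (4 * β)) *
          (α / β) ^ (((r.val + 1) - (s.val + 1) - 1) / 2) *
          (1 - (-1 : ℝ) ^ (s.val + 1)) * (1 + (-1 : ℝ) ^ (r.val + 1))) ∧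
    (∀ r s : Fin N, r.val ≤ s.val →
      -((altH N α β)⁻¹ r s) =
        ((-1 : ℝ) ^ (((r.val + 1) + (s.val + 1) - 1) / 2) / (4 * β)) *
          (α / β) ^ (((s.val + 1) - (r.val + 1) - 1) / 2) *
          (1 - (-1 : ℝ) ^ (r.val + 1)) * (1 + (-1 : ℝ) ^ (s.val + 1))) := by
  have hmul := altH_mul_altHInv (α := α) hN hβ
  rw [Matrix.inv_eq_right_inv hmul]
  refine ⟨Matrix.isUnit_det_of_right_inverse hmul, fun r s h => neg_altHInv_eq h, fun r s h => ?_⟩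
  rw [Matrix.of_apply, altHInv_comm, neg_altHInv_eq h, add_comm (r.val + 1)]

theorem greens_function_altH (N : ℕ) (hN : Even N) (hpos : 0 < N)
    (α β : ℝ) (hα : α ≠ 0) (hβ : β ≠ 0) :
    IsUnit (altH N α β).det ∧
    (∀ r s : Fin N, s.val ≤ r.val →
      -((altH N α β)⁻¹ r s) =
        ((-1 : ℝ) ^ (((r.val + 1) + (s.val + 1) - 1) / 2) / (4 * β)) *
          (α / β) ^ (((r.val + 1) - (s.val + 1) - 1) / 2) *
          (1 - (-1 : ℝ) ^ (s.val + 1)) * (1 + (-1 : ℝ) ^ (r.val + 1))) ∧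
    (∀ r s : Fin N, r.val ≤ s.val →
      -((altH N α β)⁻¹ r s) =
        ((-1 : ℝ) ^ (((r.val + 1) + (s.val + 1) - 1) / 2) / (4 * β)) *
          (α / β) ^ (((s.val + 1) - (r.val + 1) - 1) / 2) *
          (1 - (-1 : ℝ) ^ (r.val + 1)) * (1 + (-1 : ℝ) ^ (s.val + 1))) :=
  greens_function_altH_general N hN α β hβ
end
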